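/- Let (a_{n,k})_{1≤k≤n} and (b_{n,k})_{1≤k≤n} be two triangular arrays in [0,∞), and let μ_n := n^{-1} Σ_{k=1}^n δ_{a_{n,k}} and ν_n := n^{-1} Σ_{k=1}^n δ_{b_{n,k}}. Suppose that for all sufficiently large n: (i) a_{n,1} ≥ ⋯ ≥ a_{n,n} and b_{n,1} ≥ ⋯ ≥ b_{n,n}; (ii) ∏_{i=1}^k a_{n,i} ≤ ∏_{i=1}^k b_{n,i} for every 1 ≤ k ≤ n; (iii) ∏_{i=k}^n b_{n,i} ≤ ∏_{i=k}^n a_{n,i} for every 1 ≤ k ≤ n; and moreover (iv) (ν_n)_{n≥1} converges weakly to some probability measure ν; (v) log(·) is uniformly integrable for (ν_n)_{n≥1}. Then: (j) the sequence (μ_n)_{n≥1} is tight; (jj) log(·) is uniformly integrable for (μ_n)_{n≥1}; (jjj) ∫_0^∞ log(t) dμ_n(dt) = ∫_0^∞ log(t) dν_n(dt) for all sufficiently large n, and this common value converges to ∫_0^∞ log(t) dν(dt) as n → ∞. In particular, every weak adherence value μ of (μ_n)_{n≥1} satisfies ∫_0^∞ log(t) dμ(dt) = ∫_0^∞ log(t)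 dν(dt). -/

import Mathlib

/-!
Passing to logarithms, (ii) and (iii) say that `log a_n` is weakly majorized by `log b_n` from the
top and from the bottom. For the nonincreasing array `log a_n` this gives
`∑ₖ (log a_{n,k} - s)⁺ ≤ ∑ₖ (log b_{n,k} - s)⁺` and
`∑ₖ (-s - log a_{n,k})⁺ ≤ ∑ₖ (-s - log b_{n,k})⁺`,
and since `|x| 1_{|x|>t} ≤ 2 (|x| - t/2)⁺ ≤ 2 |x| 1_{|x|>t/2}`, the `|log|`-tail of `μ_n` at
level `t` is at most twice that of `ν_n` at level `t/2`. This gives uniform integrability for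
`(μ_n)`, and tightness by Markov's inequality; `k = n` in (ii) and (iii) gives
`∫ log dμ_n = ∫ log dν_n`. Under weak convergence, uniform integrability lets one replace `log` by
its truncation to `[-M, M]`, a bounded continuous function, so `∫ log dν_n → ∫ log dν`; the same
argument along a subsequence of `(μ_n)` identifies `∫ log` at its adherence values.
-/

open MeasureTheory Filter Topology
open scoped ENNReal

noncomputable section

/-- Empirical measure of the first `n` values of `f`. -/
def empMeas (f : ℕ → ℝ) (n : ℕ) : Measure ℝ :=
  (n : ℝ≥0∞)⁻¹ • ∑ k ∈ Finset.range n, Measure.dirac (f k)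

/-- `|log s|` with value `∞` at `s = 0`. -/
def logAbsE (s : ℝ) : ℝ≥0∞ := if s = 0 then ⊤ else ENNReal.ofReal |Real.log s|

/-- `log` is uniformly integrable for the sequence of measures `η`:
`lim_{t→∞} limsup_n ∫_{{|log| > t}} |log| dη_n = 0`. -/
def UnifIntLog (η : ℕ → Measure ℝ) : Prop :=
  Tendsto (fun t : ℝ =>
      limsup (fun n => ∫⁻ s in {s : ℝ | ENNReal.ofReal t < logAbsE s}, logAbsE s ∂(η n)) atTop)
    atTop (𝓝 (0 : ℝ≥0∞))

section EmpiricalMeasure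

variable (f : ℕ → ℝ) (n : ℕ)

lemma empMeas_apply (s : Set ℝ) :
    empMeas f n s = (n : ℝ≥0∞)⁻¹ * ∑ k ∈ Finset.range n, Measure.dirac (f k) s := by
  simp [empMeas]

lemma lintegral_empMeas (g : ℝ → ℝ≥0∞) :
    ∫⁻ x, g x ∂(empMeas f n) = (n : ℝ≥0∞)⁻¹ * ∑ k ∈ Finset.range n, g (f k) := by
  simp [empMeas]

lemma integral_empMeas (g : ℝ → ℝ) :
    ∫ x, g x ∂(empMeas f n) = (n : ℝ)⁻¹ * ∑ k ∈ Finset.range n, g (f k) := by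
  rw [empMeas, integral_smul_measure, integral_finsetSum_measure
    fun k _ => (integrable_congr (ae_eq_dirac g)).2 (integrable_const _)]
  simp [ENNReal.toReal_inv, smul_eq_mul]

lemma isProbabilityMeasure_empMeas (hn : n ≠ 0) : IsProbabilityMeasure (empMeas f n) :=
  ⟨by simp [empMeas_apply, ENNReal.inv_mul_cancel (Nat.cast_ne_zero.2 hn)]⟩

lemma eventually_isProbabilityMeasure_empMeas (c : ℕ → ℕ → ℝ) {φ : ℕ → ℕ}
    (hφ : Tendsto φ atTop atTop) : ∀ᶠ j in atTop, IsProbabilityMeasure (empMeas (c (φ j)) (φ j)) :=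
  (hφ.eventually (eventually_ne_atTop 0)).mono fun _ hj => isProbabilityMeasure_empMeas _ _ hj

instance : IsFiniteMeasure (empMeas f n) := by
  rcases eq_or_ne n 0 with rfl | hn
  · simp only [empMeas, Finset.range_zero, Finset.sum_empty, smul_zero]
    infer_instance
  · have := isProbabilityMeasure_empMeas f n hn
    infer_instance

lemma ne_zero_of_empMeas_singleton_zero (h : empMeas f n {0} = 0) : ∀ k < n, f k ≠ 0 := by
  intro k hk hfk
  rw [empMeas_apply, mul_eq_zero, Finset.sum_eq_zero_iff] at h
  rcases h with h | h
  · simp at h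
  · simpa [hfk] using h k (Finset.mem_range.2 hk)

end EmpiricalMeasure

section Majorization

open Finset

variable {α β : ℕ → ℝ} {n : ℕ}

lemma exists_sum_max_sub_eq_sum_range (hα : AntitoneOn α (Set.Iio n)) (t : ℝ) :
    ∃ j ≤ n, ∑ i ∈ range n, max (α i - t) 0 = ∑ i ∈ range j, (α i - t) := by
  induction n with
  | zero => exact ⟨0, le_rfl, by simp⟩
  | succ n ih =>
    by_cases h : α n ≤ t
    · obtain ⟨j, hj, hsum⟩ := ih (hα.mono (Set.Iio_subset_Iio n.le_succ))
      refine ⟨j, hj.trans n.le_succ, ?_⟩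
      rw [sum_range_succ, hsum, max_eq_right (sub_nonpos.2 h), add_zero]
    · refine ⟨n + 1, le_rfl, sum_congr rfl fun i hi => max_eq_left ?_⟩
      have hi := mem_range.1 hi
      have := hα hi (Nat.lt_succ_self n) (Nat.lt_succ_iff.1 hi)
      linarith [not_le.1 h]

lemma sum_max_sub_le_of_sum_range_le (hα : AntitoneOn α (Set.Iio n))
    (h : ∀ k ≤ n, ∑ i ∈ range k, α i ≤ ∑ i ∈ range k, β i) (t : ℝ) :
    ∑ i ∈ range n, max (α i - t) 0 ≤ ∑ i ∈ range n, max (β i - t) 0 := by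
  obtain ⟨j, hj, hsum⟩ := exists_sum_max_sub_eq_sum_range hα t
  calc ∑ i ∈ range n, max (α i - t) 0 = ∑ i ∈ range j, (α i - t) := hsum
    _ ≤ ∑ i ∈ range j, (β i - t) := by
      simpa only [sum_sub_distrib] using sub_le_sub_right (h j hj) _
    _ ≤ ∑ i ∈ range j, max (β i - t) 0 := sum_le_sum fun i _ => le_max_left _ _
    _ ≤ ∑ i ∈ range n, max (β i - t) 0 :=
      sum_le_sum_of_subset_of_nonneg (range_subset_range.2 hj) fun i _ _ => le_max_right _ _

lemma sum_range_reflect_eq_sum_Ico (γ : ℕ → ℝ) {k : ℕ} (hk : k ≤ n) :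
    ∑ i ∈ range k, γ (n - 1 - i) = ∑ i ∈ Ico (n - k) n, γ i := by
  rcases n with _ | n
  · simp [Nat.le_zero.1 hk]
  · rw [Nat.add_sub_cancel, range_eq_Ico, sum_Ico_reflect γ 0 hk, Nat.sub_zero]

-- Reversing and negating the arrays exchanges the two kinds of partial sums.
lemma sum_max_neg_sub_le_of_sum_Ico_le (hα : AntitoneOn α (Set.Iio n))
    (h : ∀ k ≤ n, ∑ i ∈ Ico k n, β i ≤ ∑ i ∈ Ico k n, α i) (t : ℝ) :
    ∑ i ∈ range n, max (-t - α i) 0 ≤ ∑ i ∈ range n, max (-t - β i) 0 := by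
  have hrev : AntitoneOn (fun i => -α (n - 1 - i)) (Set.Iio n) := fun i hi j hj hij => by
    rw [Set.mem_Iio] at hi hj
    exact neg_le_neg (hα (show n - 1 - j < n by omega) (show n - 1 - i < n by omega) (by omega))
  have key := sum_max_sub_le_of_sum_range_le hrev (β := fun i => -β (n - 1 - i))
    (fun k hk => by
      simpa only [sum_neg_distrib, sum_range_reflect_eq_sum_Ico _ hk, neg_le_neg_iff]
        using h (n - k) (Nat.sub_le n k)) t
  have hrefl : ∀ γ : ℕ → ℝ,
      ∑ i ∈ range n, max (-γ (n - 1 - i) - t) 0 = ∑ i ∈ range n, max (-t - γ i) 0 := fun γ => by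
    rw [← sum_range_reflect (fun i => max (-t - γ i) 0) n]
    simp only [sub_eq_add_neg, add_comm]
  rwa [hrefl, hrefl] at key

lemma max_sub_add_max_neg_sub (x : ℝ) {s : ℝ} (hs : 0 ≤ s) :
    max (x - s) 0 + max (-s - x) 0 = max (|x| - s) 0 := by
  rcases le_total 0 x with hx | hx
  · rw [abs_of_nonneg hx, max_eq_right (by linarith : -s - x ≤ 0), add_zero]
  · rw [abs_of_nonpos hx, max_eq_right (by linarith : x - s ≤ 0), zero_add, neg_sub_comm]

lemma abs_tail_le_two_mul_max (x t : ℝ) :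
    (if t < |x| then |x| else 0) ≤ 2 * max (|x| - t / 2) 0 := by
  split_ifs with h
  · linarith [le_max_left (|x| - t / 2) 0]
  · linarith [le_max_right (|x| - t / 2) 0]

lemma max_abs_sub_le_abs_tail (x : ℝ) {s : ℝ} (hs : 0 ≤ s) :
    max (|x| - s) 0 ≤ if s < |x| then |x| else 0 := by
  split_ifs with h
  · exact max_le (by linarith) (abs_nonneg x)
  · exact (max_eq_right (by linarith)).le

lemma sum_abs_tail_le_of_majorized (hα : AntitoneOn α (Set.Iio n))
    (htop : ∀ k ≤ n, ∑ i ∈ range k, α i ≤ ∑ i ∈ range k, β i)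
    (hbot : ∀ k ≤ n, ∑ i ∈ Ico k n, β i ≤ ∑ i ∈ Ico k n, α i) {t : ℝ} (ht : 0 ≤ t) :
    ∑ i ∈ range n, (if t < |α i| then |α i| else 0)
      ≤ 2 * ∑ i ∈ range n, (if t / 2 < |β i| then |β i| else 0) := by
  have hsplit : ∀ γ : ℕ → ℝ, ∑ i ∈ range n, max (|γ i| - t / 2) 0
      = ∑ i ∈ range n, max (γ i - t / 2) 0 + ∑ i ∈ range n, max (-(t / 2) - γ i) 0 := by
    intro γ
    rw [← sum_add_distrib]
    exact sum_congr rfl fun i _ => (max_sub_add_max_neg_sub _ (by positivity)).symm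
  calc ∑ i ∈ range n, (if t < |α i| then |α i| else 0)
      ≤ 2 * ∑ i ∈ range n, max (|α i| - t / 2) 0 := by
        rw [mul_sum]; exact sum_le_sum fun i _ => abs_tail_le_two_mul_max _ _
    _ ≤ 2 * ∑ i ∈ range n, max (|β i| - t / 2) 0 := by
        rw [hsplit, hsplit]
        gcongr 2 * (?_ + ?_)
        · exact sum_max_sub_le_of_sum_range_le hα htop _
        · exact sum_max_neg_sub_le_of_sum_Ico_le hα hbot _
    _ ≤ 2 * ∑ i ∈ range n, (if t / 2 < |β i| then |β i| else 0) := by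
        gcongr with i; exact max_abs_sub_le_abs_tail _ (by positivity)

end Majorization

lemma measurable_logAbsE : Measurable logAbsE :=
  Measurable.ite (measurableSet_singleton 0) measurable_const
    (ENNReal.measurable_ofReal.comp Real.measurable_log.abs)

lemma logAbsE_of_ne {s : ℝ} (hs : s ≠ 0) : logAbsE s = ENNReal.ofReal |Real.log s| := if_neg hs

def logTailSet (t : ℝ) : Set ℝ := {s | ENNReal.ofReal t < logAbsE s}

def logTail (μ : Measure ℝ) (t : ℝ) : ℝ≥0∞ := ∫⁻ s in logTailSet t, logAbsE s ∂μ

section LogTail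

variable {μ : Measure ℝ} {t : ℝ}

lemma measurableSet_logTailSet (t : ℝ) : MeasurableSet (logTailSet t) :=
  measurable_logAbsE measurableSet_Ioi

lemma zero_mem_logTailSet (t : ℝ) : (0 : ℝ) ∈ logTailSet t := by
  simp [logTailSet, logAbsE]

lemma indicator_logTailSet_of_ne {s : ℝ} (hs : s ≠ 0) (ht : 0 ≤ t) :
    (logTailSet t).indicator logAbsE s
      = ENNReal.ofReal (if t < |Real.log s| then |Real.log s| else 0) := by
  simp only [Set.indicator, logTailSet, Set.mem_ofPred_eq, logAbsE_of_ne hs,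
    ENNReal.ofReal_lt_ofReal_iff_of_nonneg ht]
  split_ifs <;> simp

lemma logTail_le_lintegral (μ : Measure ℝ) (t : ℝ) : logTail μ t ≤ ∫⁻ s, logAbsE s ∂μ :=
  setLIntegral_le_lintegral _ _

lemma measure_zero_eq_zero_of_logTail_ne_top (h : logTail μ t ≠ ∞) : μ {0} = 0 := by
  by_contra h0
  refine h (eq_top_iff.2 ?_)
  calc ∞ = ∫⁻ s in {0}, logAbsE s ∂μ := by simp [logAbsE, ENNReal.mul_top h0]
    _ ≤ logTail μ t := lintegral_mono_set (Set.singleton_subset_iff.2 (zero_mem_logTailSet t))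

lemma measure_logTailSet_le_logTail (hT : 1 ≤ t) : μ (logTailSet t) ≤ logTail μ t :=
  calc μ (logTailSet t) ≤ ENNReal.ofReal t * μ (logTailSet t) :=
        le_mul_of_one_le_left zero_le (ENNReal.one_le_ofReal.2 hT)
    _ = ∫⁻ _ in logTailSet t, ENNReal.ofReal t ∂μ := (setLIntegral_const _ _).symm
    _ ≤ logTail μ t := setLIntegral_mono' (measurableSet_logTailSet t) fun _ hs => hs.le

lemma abs_gt_subset_logTailSet {r : ℝ} (hr : 1 ≤ r) :
    {x : ℝ | r < |x|} ⊆ logTailSet (Real.log r) := by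
  intro x (hx : r < |x|)
  have hx0 : x ≠ 0 := by rintro rfl; rw [abs_zero] at hx; linarith
  have hlog : Real.log r < |Real.log x| := calc
    Real.log r < Real.log |x| := Real.log_lt_log (by linarith) hx
    _ = Real.log x := Real.log_abs x
    _ ≤ |Real.log x| := le_abs_self _
  show ENNReal.ofReal (Real.log r) < logAbsE x
  rw [logAbsE_of_ne hx0]
  exact (ENNReal.ofReal_lt_ofReal_iff_of_nonneg (Real.log_nonneg hr)).2 hlog

lemma measure_abs_gt_le_logTail (μ : Measure ℝ) {r : ℝ} (hr : Real.exp 1 ≤ r) :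
    μ {x | r < |x|} ≤ logTail μ (Real.log r) := by
  have hr0 : 0 < r := (Real.exp_pos 1).trans_le hr
  have hr1 : 1 ≤ r := (Real.one_le_exp zero_le_one).trans hr
  exact (measure_mono (abs_gt_subset_logTailSet hr1)).trans
    (measure_logTailSet_le_logTail ((Real.le_log_iff_exp_le hr0).2 hr))

lemma lintegral_logAbsE_le_logTail_add [IsProbabilityMeasure μ] (t : ℝ) :
    ∫⁻ s, logAbsE s ∂μ ≤ logTail μ t + ENNReal.ofReal t := by
  rw [← lintegral_add_compl logAbsE (measurableSet_logTailSet t)]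
  refine add_le_add le_rfl ?_
  calc ∫⁻ s in (logTailSet t)ᶜ, logAbsE s ∂μ
      ≤ ∫⁻ _ in (logTailSet t)ᶜ, ENNReal.ofReal t ∂μ :=
        setLIntegral_mono' (measurableSet_logTailSet t).compl fun _ hs => not_lt.1 hs
    _ ≤ ENNReal.ofReal t := by
        rw [setLIntegral_const]; exact mul_le_of_le_one_right' prob_le_one

lemma integrable_log_of_lintegral_ne_top (h : ∫⁻ s, logAbsE s ∂μ ≠ ∞) :
    Integrable Real.log μ := by
  refine ⟨Real.measurable_log.aestronglyMeasurable, ?_⟩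
  rw [hasFiniteIntegral_iff_norm]
  refine (lintegral_mono fun s => ?_).trans_lt h.lt_top
  rcases eq_or_ne s 0 with rfl | hs
  · simp [logAbsE]
  · rw [logAbsE_of_ne hs, Real.norm_eq_abs]

lemma tendsto_logTail_atTop (h : ∫⁻ s, logAbsE s ∂μ ≠ ∞) :
    Tendsto (logTail μ) atTop (𝓝 0) := by
  have hlim : ∀ᵐ s ∂μ, Tendsto (fun t => (logTailSet t).indicator logAbsE s) atTop (𝓝 0) := by
    filter_upwards [ae_lt_top measurable_logAbsE h] with s hs
    refine tendsto_const_nhds.congr' ?_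
    filter_upwards [ENNReal.tendsto_ofReal_atTop.eventually (lt_mem_nhds hs)] with t ht
    exact (Set.indicator_of_notMem (s := logTailSet t) (not_lt.2 ht.le) logAbsE).symm
  have := tendsto_lintegral_filter_of_dominated_convergence logAbsE
    (Eventually.of_forall fun t => measurable_logAbsE.indicator (measurableSet_logTailSet t))
    (Eventually.of_forall fun t => ae_of_all _ (Set.indicator_le_self _ _)) h hlim
  simp only [lintegral_indicator (measurableSet_logTailSet _), lintegral_zero] at this
  exact this

end LogTail

lemma logTail_empMeas (f : ℕ → ℝ) (n : ℕ) (hf : ∀ k < n, f k ≠ 0) {t : ℝ} (ht : 0 ≤ t) :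
    logTail (empMeas f n) t = (n : ℝ≥0∞)⁻¹ * ENNReal.ofReal
      (∑ k ∈ Finset.range n, if t < |Real.log (f k)| then |Real.log (f k)| else 0) := by
  rw [logTail, ← lintegral_indicator (measurableSet_logTailSet t), lintegral_empMeas,
    ENNReal.ofReal_sum_of_nonneg fun k _ => by positivity]
  congr 1
  exact Finset.sum_congr rfl fun k hk =>
    indicator_logTailSet_of_ne (hf k (Finset.mem_range.1 hk)) ht

namespace UnifIntLog

variable {η : ℕ → Measure ℝ}

lemma eventually_logTail_lt (h : UnifIntLog η) {ε : ℝ≥0∞} (hε : 0 < ε) :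
    ∀ᶠ t in atTop, ∀ᶠ n in atTop, logTail (η n) t < ε :=
  (Tendsto.eventually_lt_const hε h).mono fun _ ht => eventually_lt_of_limsup_lt ht

lemma eventually_measure_zero_eq_zero (h : UnifIntLog η) : ∀ᶠ n in atTop, η n {0} = 0 := by
  obtain ⟨t, ht⟩ := (h.eventually_logTail_lt zero_lt_one).exists
  exact ht.mono fun n hn => measure_zero_eq_zero_of_logTail_ne_top (hn.trans ENNReal.one_lt_top).ne

lemma exists_eventually_lintegral_le (h : UnifIntLog η)
    (hη : ∀ᶠ n in atTop, IsProbabilityMeasure (η n)) :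
    ∃ C ≠ ∞, ∀ᶠ n in atTop, ∫⁻ s, logAbsE s ∂(η n) ≤ C := by
  obtain ⟨t, ht⟩ := (h.eventually_logTail_lt zero_lt_one).exists
  refine ⟨1 + ENNReal.ofReal t, by finiteness, ?_⟩
  filter_upwards [ht, hη] with n hn _
  exact (lintegral_logAbsE_le_logTail_add t).trans (add_le_add hn.le le_rfl)

lemma comp_tendsto (h : UnifIntLog η) {φ : ℕ → ℕ} (hφ : Tendsto φ atTop atTop) :
    UnifIntLog (fun j => η (φ j)) :=
  tendsto_of_tendsto_of_tendsto_of_le_of_le tendsto_const_nhds h (fun _ => zero_le) fun t =>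
    (limsup_comp (fun n => logTail (η n) t) φ atTop).le.trans (limsup_le_limsup_of_le hφ)

lemma of_logTail_le {ξ : ℕ → Measure ℝ} (hξ : UnifIntLog ξ) {C : ℝ≥0∞} (hC : C ≠ ∞) {c : ℝ}
    (hc : 0 < c) (h : ∀ t ≥ 0, ∀ᶠ n in atTop, logTail (η n) t ≤ C * logTail (ξ n) (t / c)) :
    UnifIntLog η := by
  have hlim := ENNReal.Tendsto.const_mul (hξ.comp (tendsto_id.atTop_div_const hc)) (Or.inr hC)
  rw [mul_zero] at hlim
  refine tendsto_of_tendsto_of_tendsto_of_le_of_le' tendsto_const_nhds hlim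
    (Eventually.of_forall fun _ => zero_le) ?_
  filter_upwards [eventually_ge_atTop 0] with t ht
  exact (limsup_le_limsup (h t ht)).trans (ENNReal.limsup_const_mul_of_ne_top hC).le

lemma isTightMeasureSet_range [∀ n, IsFiniteMeasure (η n)] (h : UnifIntLog η) :
    IsTightMeasureSet (Set.range η) := by
  refine isTightMeasureSet_range_of_tendsto_limsup_measure_norm_gt
    (tendsto_of_tendsto_of_tendsto_of_le_of_le' tendsto_const_nhds
      (h.comp Real.tendsto_log_atTop) (Eventually.of_forall fun _ => zero_le) ?_)
  filter_upwards [eventually_ge_atTop (Real.exp 1)] with r hr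
  refine limsup_le_limsup (Eventually.of_forall fun n => ?_)
  simp only [Real.norm_eq_abs]
  exact measure_abs_gt_le_logTail (η n) hr

end UnifIntLog

lemma exists_forall_measure_abs_gt_le {η : ℕ → Measure ℝ} (h : IsTightMeasureSet (Set.range η))
    {ε : ℝ≥0∞} (hε : 0 < ε) : ∃ r : ℝ, ∀ n, η n {x | r < |x|} ≤ ε := by
  obtain ⟨r, hr⟩ := ((tendsto_measure_norm_gt_of_isTightMeasureSet h).eventually
    (ge_mem_nhds hε)).exists
  refine ⟨r, fun n => le_trans ?_ hr⟩
  simpa only [Real.norm_eq_abs] using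
    le_iSup₂ (f := fun μ (_ : μ ∈ Set.range η) => μ {x : ℝ | r < ‖x‖}) (η n) ⟨n, rfl⟩

lemma abs_max_neg_min {M : ℝ} (hM : 0 ≤ M) (x : ℝ) : |max (-M) (min M x)| = min |x| M := by
  rcases le_or_gt M x with h | h
  · rw [min_eq_left h, max_eq_right (by linarith), abs_of_nonneg hM, abs_of_nonneg (by linarith),
      min_eq_right h]
  rcases le_or_gt x (-M) with h' | h'
  · rw [min_eq_right h.le, max_eq_left h', abs_neg, abs_of_nonneg hM, abs_of_nonpos (by linarith),
      min_eq_right (by linarith)]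
  · rw [min_eq_right h.le, max_eq_right h'.le, min_eq_left (abs_lt.2 ⟨h', h⟩).le]

lemma abs_sub_max_neg_min {M : ℝ} (hM : 0 ≤ M) (x : ℝ) :
    |x - max (-M) (min M x)| = max (|x| - M) 0 := by
  rcases le_or_gt M x with h | h
  · rw [min_eq_left h, max_eq_right (by linarith), abs_of_nonneg (by linarith),
      abs_of_nonneg (by linarith), max_eq_left (by linarith)]
  rcases le_or_gt x (-M) with h' | h'
  · rw [min_eq_right h.le, max_eq_left h', abs_of_nonpos (by linarith), abs_of_nonpos (by linarith),
      max_eq_left (by linarith)]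
    ring
  · rw [min_eq_right h.le, max_eq_right h'.le, sub_self, abs_zero, max_eq_right]
    linarith [abs_lt.2 ⟨h', h⟩]

/-- `log`, truncated to `[-M, M]`; replacing `s` by `max |s| (exp (-M))` inside the logarithm
makes it continuous at `0`. -/
def clampLog (M : ℝ) : BoundedContinuousFunction ℝ ℝ :=
  BoundedContinuousFunction.ofNormedAddCommGroup
    (fun s => max (-M) (min M (Real.log (max |s| (Real.exp (-M))))))
    (continuous_const.max (continuous_const.min ((continuous_abs.max continuous_const).log
      fun _ => ((Real.exp_pos _).trans_le (le_max_right _ _)).ne')))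
    |M| fun _ => by
      rw [Real.norm_eq_abs, abs_le]
      exact ⟨(neg_le_neg (le_abs_self M)).trans (le_max_left _ _),
        max_le (neg_le_abs M) ((min_le_left _ _).trans (le_abs_self M))⟩

section ClampLog

variable {M : ℝ}

lemma clampLog_of_ne (hM : 0 ≤ M) {s : ℝ} (hs : s ≠ 0) :
    clampLog M s = max (-M) (min M (Real.log s)) := by
  change max (-M) (min M (Real.log (max |s| (Real.exp (-M))))) = _
  rcases le_total (Real.exp (-M)) |s| with h | h
  · rw [max_eq_left h, Real.log_abs]
  · have hlog : Real.log s ≤ -M := by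
      rw [← Real.log_abs, ← Real.log_exp (-M)]
      exact Real.log_le_log (abs_pos.2 hs) h
    rw [max_eq_right h, Real.log_exp, min_eq_right (by linarith), max_self,
      min_eq_right (by linarith), max_eq_left hlog]

lemma clampLog_zero (hM : 0 ≤ M) : clampLog M 0 = -M := by
  change max (-M) (min M (Real.log (max |0| (Real.exp (-M))))) = _
  rw [abs_zero, max_eq_right (Real.exp_pos _).le, Real.log_exp, min_eq_right (by linarith),
    max_self]

lemma ofReal_abs_clampLog (hM : 0 ≤ M) (s : ℝ) :
    ENNReal.ofReal |clampLog M s| = logAbsE s ⊓ ENNReal.ofReal M := by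
  rcases eq_or_ne s 0 with rfl | hs
  · simp [clampLog_zero hM, abs_of_nonneg hM, logAbsE]
  · rw [clampLog_of_ne hM hs, abs_max_neg_min hM, ENNReal.ofReal_min, logAbsE_of_ne hs]

lemma enorm_log_sub_clampLog_le (hM : 0 ≤ M) {s : ℝ} (hs : s ≠ 0) :
    ‖Real.log s - clampLog M s‖ₑ ≤ (logTailSet M).indicator logAbsE s := by
  rw [indicator_logTailSet_of_ne hs hM, Real.enorm_eq_ofReal_abs, clampLog_of_ne hM hs,
    abs_sub_max_neg_min hM]
  exact ENNReal.ofReal_le_ofReal (max_abs_sub_le_abs_tail _ hM)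

end ClampLog

lemma lintegral_logAbsE_eq_iSup (μ : Measure ℝ) :
    ∫⁻ s, logAbsE s ∂μ = ⨆ M : ℕ, ∫⁻ s, logAbsE s ⊓ (M : ℝ≥0∞) ∂μ := by
  rw [← lintegral_iSup (fun M => measurable_logAbsE.min measurable_const)
    fun M N hMN s => inf_le_inf_left _ (Nat.cast_le.2 hMN)]
  simp_rw [← inf_iSup_eq, ENNReal.iSup_natCast, inf_top_eq]

lemma ofReal_integral_abs_clampLog (μ : Measure ℝ) [IsFiniteMeasure μ] {M : ℝ} (hM : 0 ≤ M) :
    ENNReal.ofReal (∫ s, |clampLog M| s ∂μ) = ∫⁻ s, logAbsE s ⊓ ENNReal.ofReal M ∂μ := by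
  rw [ofReal_integral_eq_lintegral_ofReal ((|clampLog M|).integrable μ)
    (ae_of_all _ fun _ => abs_nonneg _)]
  exact lintegral_congr fun s => ofReal_abs_clampLog hM s

lemma lintegral_logAbsE_le_of_tendsto {η : ℕ → Measure ℝ} {m : Measure ℝ} [IsFiniteMeasure m]
    (hη : ∀ᶠ n in atTop, IsFiniteMeasure (η n))
    (hw : ∀ f : BoundedContinuousFunction ℝ ℝ,
      Tendsto (fun n => ∫ x, f x ∂(η n)) atTop (𝓝 (∫ x, f x ∂m)))
    {C : ℝ≥0∞} (hC : ∀ᶠ n in atTop, ∫⁻ s, logAbsE s ∂(η n) ≤ C) :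
    ∫⁻ s, logAbsE s ∂m ≤ C := by
  rw [lintegral_logAbsE_eq_iSup]
  refine iSup_le fun M => ?_
  have hM : (0 : ℝ) ≤ M := M.cast_nonneg
  rw [← ENNReal.ofReal_natCast, ← ofReal_integral_abs_clampLog m hM]
  refine le_of_tendsto (ENNReal.tendsto_ofReal (hw |clampLog M|)) ?_
  filter_upwards [hη, hC] with n _ hn
  rw [ofReal_integral_abs_clampLog (η n) hM]
  exact (lintegral_mono fun _ => inf_le_left).trans hn

lemma edist_integral_log_integral_clampLog_le {μ : Measure ℝ} [IsFiniteMeasure μ]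
    (h : ∫⁻ s, logAbsE s ∂μ ≠ ∞) {M : ℝ} (hM : 0 ≤ M) :
    edist (∫ s, Real.log s ∂μ) (∫ s, clampLog M s ∂μ) ≤ logTail μ M := by
  have h0 : ∀ᵐ s ∂μ, s ≠ 0 := measure_eq_zero_iff_ae_notMem.1
    (measure_zero_eq_zero_of_logTail_ne_top (ne_top_of_le_ne_top h (logTail_le_lintegral μ M)))
  rw [edist_eq_enorm_sub, ← integral_sub (integrable_log_of_lintegral_ne_top h)
    ((clampLog M).integrable μ), logTail, ← lintegral_indicator (measurableSet_logTailSet M)]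
  exact (enorm_integral_le_lintegral_enorm _).trans
    (lintegral_mono_ae (h0.mono fun s hs => enorm_log_sub_clampLog_le hM hs))

lemma tendsto_of_forall_exists_approx {ι X : Type*} [PseudoMetricSpace X] {l : Filter ι}
    {u : ι → X} {x : X}
    (h : ∀ ε > 0, ∃ (v : ι → X) (y : X),
      Tendsto v l (𝓝 y) ∧ (∀ᶠ i in l, dist (u i) (v i) < ε) ∧ dist y x < ε) :
    Tendsto u l (𝓝 x) := by
  refine Metric.tendsto_nhds.2 fun ε hε => ?_
  obtain ⟨v, y, hv, huv, hy⟩ := h (ε / 3) (by positivity)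
  filter_upwards [huv, Metric.tendsto_nhds.1 hv (ε / 3) (by positivity)] with i h₁ h₂
  linarith [dist_triangle4 (u i) (v i) y x]

theorem tendsto_integral_log_of_tendsto {η : ℕ → Measure ℝ} {m : Measure ℝ} [IsFiniteMeasure m]
    (hη : ∀ᶠ n in atTop, IsProbabilityMeasure (η n))
    (hw : ∀ f : BoundedContinuousFunction ℝ ℝ,
      Tendsto (fun n => ∫ x, f x ∂(η n)) atTop (𝓝 (∫ x, f x ∂m)))
    (hui : UnifIntLog η) :
    Tendsto (fun n => ∫ s, Real.log s ∂(η n)) atTop (𝓝 (∫ s, Real.log s ∂m)) := by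
  obtain ⟨C, hC, hηC⟩ := hui.exists_eventually_lintegral_le hη
  have hm : ∫⁻ s, logAbsE s ∂m ≠ ∞ := ne_top_of_le_ne_top hC
    (lintegral_logAbsE_le_of_tendsto (hη.mono fun _ _ => inferInstance) hw hηC)
  refine tendsto_of_forall_exists_approx fun ε hε => ?_
  have hε' : (0 : ℝ≥0∞) < ENNReal.ofReal ε := ENNReal.ofReal_pos.2 hε
  obtain ⟨M, hM, hMη, hMm⟩ := ((eventually_ge_atTop 0).and ((hui.eventually_logTail_lt hε').and
    ((tendsto_logTail_atTop hm).eventually_lt_const hε'))).exists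
  refine ⟨fun n => ∫ s, clampLog M s ∂(η n), ∫ s, clampLog M s ∂m, hw _, ?_, ?_⟩
  · filter_upwards [hMη, hηC, hη] with n hn hnC _
    exact edist_lt_ofReal.1 ((edist_integral_log_integral_clampLog_le
      (ne_top_of_le_ne_top hC hnC) hM).trans_lt hn)
  · rw [dist_comm]
    exact edist_lt_ofReal.1 ((edist_integral_log_integral_clampLog_le hm hM).trans_lt hMm)

lemma sum_log_le_sum_log_of_prod_le {ι : Type*} {s : Finset ι} {x y : ι → ℝ}
    (hx : ∀ i ∈ s, 0 < x i) (hy : ∀ i ∈ s, 0 < y i) (h : ∏ i ∈ s, x i ≤ ∏ i ∈ s, y i) :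
    ∑ i ∈ s, Real.log (x i) ≤ ∑ i ∈ s, Real.log (y i) := by
  rw [← Real.log_prod fun i hi => (hx i hi).ne', ← Real.log_prod fun i hi => (hy i hi).ne']
  exact Real.log_le_log (Finset.prod_pos hx) h

/-- Conditions (i)–(iii) on the row `n`, with entries indexed by `0, …, n - 1`. -/
structure ProdMajorized (n : ℕ) (a b : ℕ → ℝ) : Prop where
  antitoneOn : AntitoneOn a (Set.Iio n)
  prod_range_le : ∀ k ≤ n, ∏ i ∈ Finset.range k, a i ≤ ∏ i ∈ Finset.range k, b i
  prod_Ico_le : ∀ k < n, ∏ i ∈ Finset.Ico k n, b i ≤ ∏ i ∈ Finset.Ico k n, a i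

namespace ProdMajorized

variable {n : ℕ} {a b : ℕ → ℝ}

lemma pos (h : ProdMajorized n a b) (hb : ∀ k < n, 0 < b k) : ∀ k < n, 0 < a k := by
  intro k hk
  have hn : n - 1 < n := by omega
  have hlast := h.prod_Ico_le (n - 1) hn
  rw [Nat.Ico_pred_singleton (by omega), Finset.prod_singleton, Finset.prod_singleton] at hlast
  exact (hb _ hn).trans_le (hlast.trans (h.antitoneOn hk hn (by omega)))

lemma sum_log_range_le (h : ProdMajorized n a b) (hb : ∀ k < n, 0 < b k) {k : ℕ} (hk : k ≤ n) :
    ∑ i ∈ Finset.range k, Real.log (a i) ≤ ∑ i ∈ Finset.range k, Real.log (b i) :=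
  sum_log_le_sum_log_of_prod_le (fun i hi => h.pos hb i ((Finset.mem_range.1 hi).trans_le hk))
    (fun i hi => hb i ((Finset.mem_range.1 hi).trans_le hk)) (h.prod_range_le k hk)

lemma sum_log_Ico_le (h : ProdMajorized n a b) (hb : ∀ k < n, 0 < b k) {k : ℕ} (hk : k ≤ n) :
    ∑ i ∈ Finset.Ico k n, Real.log (b i) ≤ ∑ i ∈ Finset.Ico k n, Real.log (a i) := by
  rcases hk.eq_or_lt with rfl | hk
  · simp
  exact sum_log_le_sum_log_of_prod_le (fun i hi => hb i (Finset.mem_Ico.1 hi).2)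
    (fun i hi => h.pos hb i (Finset.mem_Ico.1 hi).2) (h.prod_Ico_le k hk)

lemma integral_log_empMeas_eq (h : ProdMajorized n a b) (hb : ∀ k < n, 0 < b k) :
    ∫ s, Real.log s ∂(empMeas a n) = ∫ s, Real.log s ∂(empMeas b n) := by
  have hsum := le_antisymm (h.sum_log_range_le hb le_rfl)
    (by simpa [← Finset.range_eq_Ico] using h.sum_log_Ico_le hb (Nat.zero_le n))
  rw [integral_empMeas, integral_empMeas, hsum]

lemma logTail_empMeas_le (h : ProdMajorized n a b) (hb : ∀ k < n, 0 < b k) {t : ℝ} (ht : 0 ≤ t) :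
    logTail (empMeas a n) t ≤ 2 * logTail (empMeas b n) (t / 2) := by
  have hlog : AntitoneOn (fun i => Real.log (a i)) (Set.Iio n) := fun i hi j hj hij =>
    Real.log_le_log (h.pos hb j hj) (h.antitoneOn hi hj hij)
  rw [logTail_empMeas a n (fun k hk => (h.pos hb k hk).ne') ht,
    logTail_empMeas b n (fun k hk => (hb k hk).ne') (by positivity), mul_left_comm,
    ← ENNReal.ofReal_ofNat 2, ← ENNReal.ofReal_mul zero_le_two]
  gcongr
  exact sum_abs_tail_le_of_majorized hlog (fun k hk => h.sum_log_range_le hb hk)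
    (fun k hk => h.sum_log_Ico_le hb hk) ht

end ProdMajorized

theorem log_majorization_uniform_integrability_general
    (a b : ℕ → ℕ → ℝ) (ν : Measure ℝ) [IsProbabilityMeasure ν]
    (hb_nonneg : ∀ n k, k < n → 0 ≤ b n k)
    (h_mono : ∀ᶠ n in atTop,
      (∀ i j : ℕ, i ≤ j → j < n → a n j ≤ a n i) ∧
      (∀ i j : ℕ, i ≤ j → j < n → b n j ≤ b n i))
    (h_prod_le : ∀ᶠ n in atTop, ∀ k ≤ n,
      ∏ i ∈ Finset.range k, a n i ≤ ∏ i ∈ Finset.range k, b n i)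
    (h_prod_ge : ∀ᶠ n in atTop, ∀ k < n,
      ∏ i ∈ Finset.Ico k n, b n i ≤ ∏ i ∈ Finset.Ico k n, a n i)
    (h_weak : ∀ f : BoundedContinuousFunction ℝ ℝ,
      Tendsto (fun n => ∫ x, f x ∂(empMeas (b n) n)) atTop (𝓝 (∫ x, f x ∂ν)))
    (h_ui : UnifIntLog (fun n => empMeas (b n) n)) :
    (∀ ε : ℝ, 0 < ε → ∃ r : ℝ, ∀ n : ℕ,
      (empMeas (a n) n) {x : ℝ | r < |x|} ≤ ENNReal.ofReal ε) ∧
    UnifIntLog (fun n => empMeas (a n) n) ∧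
    ((∀ᶠ n in atTop,
        ∫ t, Real.log t ∂(empMeas (a n) n) = ∫ t, Real.log t ∂(empMeas (b n) n)) ∧
      Tendsto (fun n => ∫ t, Real.log t ∂(empMeas (a n) n)) atTop
        (𝓝 (∫ t, Real.log t ∂ν))) ∧
    (∀ m : Measure ℝ, IsProbabilityMeasure m →
      (∃ φ : ℕ → ℕ, StrictMono φ ∧ ∀ f : BoundedContinuousFunction ℝ ℝ,
        Tendsto (fun j => ∫ x, f x ∂(empMeas (a (φ j)) (φ j))) atTop (𝓝 (∫ x, f x ∂m))) →
      ∫ t, Real.log t ∂m = ∫ t, Real.log t ∂ν) := by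
  have hrow : ∀ᶠ n in atTop, ProdMajorized n (a n) (b n) := by
    filter_upwards [h_mono, h_prod_le, h_prod_ge] with n hmono hle hge
    exact ⟨fun i _ j hj hij => hmono.1 i j hij hj, hle, hge⟩
  -- Uniform integrability of `log` forbids atoms at `0`.
  have hbpos : ∀ᶠ n in atTop, ∀ k < n, 0 < b n k := by
    filter_upwards [h_ui.eventually_measure_zero_eq_zero] with n hn k hk
    exact (hb_nonneg n k hk).lt_of_ne' (ne_zero_of_empMeas_singleton_zero _ _ hn k hk)
  have hEq : ∀ᶠ n in atTop,
      ∫ t, Real.log t ∂(empMeas (a n) n) = ∫ t, Real.log t ∂(empMeas (b n) n) := by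
    filter_upwards [hrow, hbpos] with n h hb using h.integral_log_empMeas_eq hb
  have hUI : UnifIntLog (fun n => empMeas (a n) n) :=
    h_ui.of_logTail_le (C := 2) ENNReal.ofNat_ne_top two_pos fun t ht => by
      filter_upwards [hrow, hbpos] with n h hb using h.logTail_empMeas_le hb ht
  have hlim : Tendsto (fun n => ∫ t, Real.log t ∂(empMeas (a n) n)) atTop
      (𝓝 (∫ t, Real.log t ∂ν)) :=
    (tendsto_integral_log_of_tendsto (eventually_isProbabilityMeasure_empMeas b tendsto_id)
      h_weak h_ui).congr' (hEq.mono fun _ h => h.symm)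
  refine ⟨fun ε hε => exists_forall_measure_abs_gt_le hUI.isTightMeasureSet_range
    (ENNReal.ofReal_pos.2 hε), hUI, ⟨hEq, hlim⟩, ?_⟩
  rintro m hm ⟨φ, hφ, hw⟩
  exact tendsto_nhds_unique (tendsto_integral_log_of_tendsto
    (eventually_isProbabilityMeasure_empMeas a hφ.tendsto_atTop) hw
    (hUI.comp_tendsto hφ.tendsto_atTop)) (hlim.comp hφ.tendsto_atTop)

/-- Logarithmic majorization and uniform integrability: given two nonnegative triangular arrays
`a`, `b` (0-based indexing, row `n` has entries `a n 0, …, a n (n-1)`), nonincreasing for `n ≫ 1`,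
whose partial products from the top are majorized by those of `b` and partial products from the
bottom dominate those of `b`, if the empirical measures `ν_n` of `b` converge weakly to a
probability measure `ν` with `log` uniformly integrable, then the empirical measures `μ_n` of `a`
are tight, `log` is uniformly integrable for them, `∫ log dμ_n = ∫ log dν_n → ∫ log dν`, and
every weak adherence value `m` of `(μ_n)` satisfies `∫ log dm = ∫ log dν`. -/
theorem log_majorization_uniform_integrability
    (a b : ℕ → ℕ → ℝ) (ν : Measure ℝ) [IsProbabilityMeasure ν]
    (ha_nonneg : ∀ n k, k < n → 0 ≤ a n k) (hb_nonneg : ∀ n k, k < n → 0 ≤ b n k)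
    (h_mono : ∀ᶠ n in atTop,
      (∀ i j : ℕ, i ≤ j → j < n → a n j ≤ a n i) ∧
      (∀ i j : ℕ, i ≤ j → j < n → b n j ≤ b n i))
    (h_prod_le : ∀ᶠ n in atTop, ∀ k ≤ n,
      ∏ i ∈ Finset.range k, a n i ≤ ∏ i ∈ Finset.range k, b n i)
    (h_prod_ge : ∀ᶠ n in atTop, ∀ k < n,
      ∏ i ∈ Finset.Ico k n, b n i ≤ ∏ i ∈ Finset.Ico k n, a n i)
    (h_weak : ∀ f : BoundedContinuousFunction ℝ ℝ,
      Tendsto (fun n => ∫ x, f x ∂(empMeas (b n) n)) atTop (𝓝 (∫ x, f x ∂ν)))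
    (h_ui : UnifIntLog (fun n => empMeas (b n) n)) :
    (∀ ε : ℝ, 0 < ε → ∃ r : ℝ, ∀ n : ℕ,
      (empMeas (a n) n) {x : ℝ | r < |x|} ≤ ENNReal.ofReal ε) ∧
    UnifIntLog (fun n => empMeas (a n) n) ∧
    ((∀ᶠ n in atTop,
        ∫ t, Real.log t ∂(empMeas (a n) n) = ∫ t, Real.log t ∂(empMeas (b n) n)) ∧
      Tendsto (fun n => ∫ t, Real.log t ∂(empMeas (a n) n)) atTop
        (𝓝 (∫ t, Real.log t ∂ν))) ∧
    (∀ m : Measure ℝ, IsProbabilityMeasure m →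
      (∃ φ : ℕ → ℕ, StrictMono φ ∧ ∀ f : BoundedContinuousFunction ℝ ℝ,
        Tendsto (fun j => ∫ x, f x ∂(empMeas (a (φ j)) (φ j))) atTop (𝓝 (∫ x, f x ∂m))) →
      ∫ t, Real.log t ∂m = ∫ t, Real.log t ∂ν) :=
  log_majorization_uniform_integrability_general a b ν hb_nonneg h_mono h_prod_le h_prod_ge h_weak
    h_ui
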